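/- Let n, k ≥ 1. On ℂ[x_{j,c} : 1 ≤ j ≤ n, 1 ≤ c ≤ k], for a ∈ {1,…,2n} and c ∈ {1,…,k} let q̂_{a,c} be: multiplication by x_{a,c} if a ≤ n, and −i·∂/∂x_{a−n,c} if a > n. For X ∈ Mat_{2n}(ℂ) with XᵀJₙ + JₙX = 0, set π(X) = (i/2) Σ_{a,b=1}^{2n} (JₙX)_{b,a} Σ_{c=1}^k (q̂_{a,c} ∘ q̂_{b,c}). Then: (a) π(X)∘π(Y) − π(Y)∘π(X) = π(XY − YX) for all X, Y ∈ sp_n(ℂ); (b) for every g ∈ Mat_k(ℂ) with gᵀg = 1_k, letting ρ(g) be the ℂ-algebra endomorphism determined by x_{j,a} ↦ Σ_b x_{j,b} g_{b,a}, one has ρ(g) ∘ π(X) = π(X) ∘ ρ(g) for all X ∈ sp_n(ℂ). -/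

import Mathlib

/-!
The operators `q̂_{a,c}` satisfy the canonical commutation relations
`[q̂_{a,c}, q̂_{b,d}] = δ_{cd} Ω_{ab}` with `Ω = i Jₙ`. In any algebra with generators obeying such
relations, bracketing with a quadratic element `S(A) = Σ_{a,b} A_{ba} Σ_c q_{a,c} q_{b,c}` maps the
generators linearly to generators, `q_{e,d} ↦ Σ_b (Ω (A + Aᵀ))_{eb} q_{b,d}`, so by the Leibniz rule
`[S(A), S(B)]` is again quadratic. Since `π(X) = (i/2) S(Jₙ X)` and `Jₙ X` is symmetric for
`X ∈ sp_n`, the resulting matrix is a multiple of `Jₙ [X, Y]`, which is (a).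

For (b), the chain rule shows that `ρ(g)` intertwines `q̂_{a,d}` with `Σ_c g_{cd} q̂_{a,c}`
(on the derivative side this needs `gᵀ g = 1`), and the contractions `Σ_c q̂_{a,c} q̂_{b,c}` are
invariant under such a substitution because `g gᵀ = 1`.
-/

open Matrix MvPolynomial

/-- The standard complex symplectic matrix `Jₙ = [[0, 1ₙ], [−1ₙ, 0]]`. -/
noncomputable def Jmat (n : ℕ) : Matrix (Fin n ⊕ Fin n) (Fin n ⊕ Fin n) ℂ :=
  Matrix.fromBlocks 0 1 (-1) 0

/-- The quantized coordinates `q̂_{a,c}` on `ℂ[x_{j,c}]`: multiplication by `x_{a,c}` for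
`a ≤ n` (`Sum.inl`), and `−i ∂/∂x_{a−n,c}` for `a > n` (`Sum.inr`). -/
noncomputable def qop (n k : ℕ) :
    Fin n ⊕ Fin n → Fin k → Module.End ℂ (MvPolynomial (Fin n × Fin k) ℂ)
  | Sum.inl a, c => LinearMap.mulLeft ℂ (MvPolynomial.X (a, c))
  | Sum.inr a, c => (-Complex.I) • (MvPolynomial.pderiv (a, c)).toLinearMap

/-- The quantized moment map representation
`π(X) = (i/2) Σ_{a,b} (Jₙ X)_{b,a} Σ_c q̂_{a,c} ∘ q̂_{b,c}`. -/
noncomputable def oscRep (n k : ℕ) (X : Matrix (Fin n ⊕ Fin n) (Fin n ⊕ Fin n) ℂ) :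
    Module.End ℂ (MvPolynomial (Fin n × Fin k) ℂ) :=
  (Complex.I / 2) • ∑ a : Fin n ⊕ Fin n, ∑ b : Fin n ⊕ Fin n,
    ((Jmat n * X) b a) • ∑ c : Fin k, qop n k a c * qop n k b c

/-- The right-translation operator `ρ(g) : f(x) ↦ f(xg)` determined by
`x_{j,a} ↦ Σ_b x_{j,b} g_{b,a}`. -/
noncomputable def rho (n k : ℕ) (g : Matrix (Fin k) (Fin k) ℂ) :
    MvPolynomial (Fin n × Fin k) ℂ →ₐ[ℂ] MvPolynomial (Fin n × Fin k) ℂ :=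
  MvPolynomial.aeval fun p =>
    ∑ b : Fin k, MvPolynomial.X (p.1, b) * MvPolynomial.C (g b p.2)

theorem MvPolynomial.pderiv_pderiv_comm {σ R : Type*} [CommSemiring R] (i j : σ)
    (f : MvPolynomial σ R) : pderiv i (pderiv j f) = pderiv j (pderiv i f) := by
  classical
  induction f using MvPolynomial.induction_on with
  | C a => simp
  | add f g hf hg => simp [hf, hg]
  | mul_X f s hf =>
    simp only [pderiv_mul, map_add, hf, pderiv_X, Pi.single_apply]
    split_ifs <;> simp [add_right_comm]

theorem MvPolynomial.pderiv_aeval {σ τ R : Type*} [CommSemiring R] [Fintype σ]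
    (v : σ → MvPolynomial τ R) (i : τ) (f : MvPolynomial σ R) :
    pderiv i (aeval v f) = ∑ s, aeval v (pderiv s f) * pderiv i (v s) := by
  classical
  induction f using MvPolynomial.induction_on with
  | C a => simp
  | add f g hf hg => simp only [map_add, hf, hg, add_mul, Finset.sum_add_distrib]
  | mul_X f s hf =>
    simp only [map_mul, aeval_X, pderiv_mul, hf, pderiv_X, Pi.single_apply, map_add, add_mul,
      Finset.sum_add_distrib, Finset.sum_mul, mul_ite, mul_one, mul_zero, apply_ite (aeval v),
      map_zero, ite_mul, zero_mul, Finset.sum_ite_eq, Finset.mem_univ, if_true,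
      mul_right_comm _ (v s)]

section QuadraticOperators

variable {K R ι κ : Type*} [CommRing K] [Ring R] [Algebra K R] [Fintype κ]

-- `⁅x, y⁆` on a ring elaborates to `Ring.instBracket`, which Mathlib's `lie_sum`, `lie_smul`, …
-- (stated for the `LieRingModule` bracket) do not rewrite.
theorem Ring.lie_sum_right {α : Type*} (s : Finset α) (x : R) (f : α → R) :
    ⁅x, ∑ i ∈ s, f i⁆ = ∑ i ∈ s, ⁅x, f i⁆ := by
  simp only [Ring.lie_def, Finset.mul_sum, Finset.sum_mul, Finset.sum_sub_distrib]

theorem Ring.lie_smul_right (c : K) (x y : R) : ⁅x, c • y⁆ = c • ⁅x, y⁆ := by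
  simp only [Ring.lie_def, mul_smul_comm, smul_mul_assoc, smul_sub]

theorem Ring.lie_mul_right (x y z : R) : ⁅x, y * z⁆ = ⁅x, y⁆ * z + y * ⁅x, z⁆ := by
  simp only [Ring.lie_def]
  noncomm_ring

def contraction (q : ι → κ → R) (a b : ι) : R := ∑ c, q a c * q b c

def SatisfiesCCR [DecidableEq κ] (q : ι → κ → R) (Ω : Matrix ι ι K) : Prop :=
  ∀ a b c d, ⁅q a c, q b d⁆ = if c = d then Ω a b • 1 else 0

theorem commute_contraction_of_mul_eq [DecidableEq κ] {q : ι → κ → R} {r : R}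
    {g : Matrix κ κ K} (hg : g * gᵀ = 1) (hr : ∀ a d, r * q a d = ∑ c, g c d • (q a c * r))
    (a b : ι) : Commute r (contraction q a b) := by
  have hr₂ : ∀ d, r * (q a d * q b d) = ∑ c, ∑ c', (g c d * g c' d) • (q a c * q b c' * r) := by
    intro d
    rw [← mul_assoc, hr, Finset.sum_mul]
    simp only [smul_mul_assoc, mul_assoc, hr, Finset.mul_sum, Finset.smul_sum, mul_smul_comm,
      smul_smul]
  have hgg : ∀ c c', ∑ d, g c d * g c' d = if c = c' then 1 else 0 := fun c c' => by
    rw [← Matrix.one_apply, ← hg, Matrix.mul_apply]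
    simp only [Matrix.transpose_apply]
  rw [Commute, SemiconjBy, contraction, Finset.mul_sum, Finset.sum_mul]
  simp only [hr₂]
  rw [Finset.sum_comm]
  refine Finset.sum_congr rfl fun c _ => ?_
  rw [Finset.sum_comm]
  simp only [← Finset.sum_smul, hgg, ite_smul, one_smul, zero_smul, Finset.sum_ite_eq,
    Finset.mem_univ, if_true]

variable [Fintype ι]

def quadOp (q : ι → κ → R) : Matrix ι ι K →ₗ[K] R where
  toFun M := ∑ a, ∑ b, M b a • contraction q a b
  map_add' M N := by simp only [Matrix.add_apply, add_smul, Finset.sum_add_distrib]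
  map_smul' c M := by
    simp only [Matrix.smul_apply, smul_eq_mul, mul_smul, Finset.smul_sum, RingHom.id_apply]

theorem quadOp_apply (q : ι → κ → R) (M : Matrix ι ι K) :
    quadOp q M = ∑ a, ∑ b, M b a • contraction q a b := rfl

variable {q : ι → κ → R}

theorem commute_quadOp_of_mul_eq [DecidableEq κ] {r : R} {g : Matrix κ κ K} (hg : g * gᵀ = 1)
    (hr : ∀ a d, r * q a d = ∑ c, g c d • (q a c * r)) (M : Matrix ι ι K) :
    Commute r (quadOp q M) :=
  Commute.sum_right _ _ _ fun a _ => Commute.sum_right _ _ _ fun b _ =>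
    (commute_contraction_of_mul_eq hg hr a b).smul_right _

theorem lie_contraction_of_lie_generator {x : R} {u : Matrix ι ι K}
    (hx : ∀ a c, ⁅x, q a c⁆ = ∑ e, u a e • q e c) (a b : ι) :
    ⁅x, contraction q a b⁆ = ∑ e, (u a e • contraction q e b + u b e • contraction q a e) := by
  simp only [contraction, Ring.lie_sum_right, Ring.lie_mul_right, hx, Finset.sum_mul,
    Finset.mul_sum, smul_mul_assoc, mul_smul_comm, Finset.sum_add_distrib, Finset.smul_sum]
  congr 1 <;> exact Finset.sum_comm

theorem lie_quadOp_of_lie_generator {x : R} {u : Matrix ι ι K}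
    (hx : ∀ a c, ⁅x, q a c⁆ = ∑ e, u a e • q e c) (B : Matrix ι ι K) :
    ⁅x, quadOp q B⁆ = quadOp q (B * u + uᵀ * B) := by
  simp only [quadOp_apply, Ring.lie_sum_right, Ring.lie_smul_right,
    lie_contraction_of_lie_generator hx, Matrix.add_apply, Matrix.mul_apply,
    Matrix.transpose_apply, add_smul, Finset.sum_smul, Finset.smul_sum, smul_add, smul_smul,
    Finset.sum_add_distrib]
  congr 1
  · exact (Finset.sum_congr rfl fun _ _ => Finset.sum_comm).trans
      (Finset.sum_comm.trans (Finset.sum_congr rfl fun _ _ => Finset.sum_comm))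
  · refine Finset.sum_congr rfl fun a _ => Finset.sum_comm.trans ?_
    simp only [mul_comm]

variable [DecidableEq κ] {Ω : Matrix ι ι K}

theorem generator_lie_quadOp (hq : SatisfiesCCR q Ω) (e : ι) (d : κ) (A : Matrix ι ι K) :
    ⁅q e d, quadOp q A⁆ = ∑ b, (Ω * (A + Aᵀ)) e b • q b d := by
  unfold SatisfiesCCR at hq
  simp only [quadOp_apply, contraction, Ring.lie_sum_right, Ring.lie_smul_right,
    Ring.lie_mul_right, hq, ite_mul, mul_ite, zero_mul, mul_zero, smul_mul_assoc, one_mul,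
    mul_smul_comm, mul_one, Finset.sum_add_distrib, Finset.sum_ite_eq, Finset.mem_univ, if_true,
    smul_add, smul_smul, Matrix.mul_apply, Matrix.add_apply, Matrix.transpose_apply, mul_add,
    add_smul, Finset.sum_smul]
  rw [add_comm]
  congr 1
  · simp only [mul_comm]
  · rw [Finset.sum_comm]
    simp only [mul_comm]

theorem quadOp_lie_quadOp (hq : SatisfiesCCR q Ω) (A B : Matrix ι ι K) :
    ⁅quadOp q A, quadOp q B⁆ = -quadOp q (B * (Ω * (A + Aᵀ)) + (Ω * (A + Aᵀ))ᵀ * B) := by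
  have hA : ∀ a c, ⁅quadOp q A, q a c⁆ = ∑ e, (-(Ω * (A + Aᵀ))) a e • q e c := by
    intro a c
    rw [Ring.lie_def, ← neg_sub, ← Ring.lie_def, generator_lie_quadOp hq]
    simp only [Matrix.neg_apply, neg_smul, Finset.sum_neg_distrib]
  rw [lie_quadOp_of_lie_generator hA, Matrix.mul_neg, Matrix.transpose_neg, Matrix.neg_mul,
    ← neg_add, map_neg]

end QuadraticOperators

theorem Jmat_transpose (n : ℕ) : (Jmat n)ᵀ = -Jmat n := by
  simp [Jmat, Matrix.fromBlocks_transpose, Matrix.fromBlocks_neg]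

theorem Jmat_mul_Jmat (n : ℕ) : Jmat n * Jmat n = -1 := by
  simp [Jmat, Matrix.fromBlocks_multiply, ← Matrix.fromBlocks_one, Matrix.fromBlocks_neg]

section Symplectic

variable {n : ℕ} {X : Matrix (Fin n ⊕ Fin n) (Fin n ⊕ Fin n) ℂ}

theorem transpose_Jmat_mul_eq_self (hX : Xᵀ * Jmat n + Jmat n * X = 0) :
    (Jmat n * X)ᵀ = Jmat n * X := by
  rw [Matrix.transpose_mul, Jmat_transpose, Matrix.mul_neg, eq_neg_of_add_eq_zero_left hX,
    neg_neg]

theorem Jmat_mul_commutator_eq (hX : Xᵀ * Jmat n + Jmat n * X = 0)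
    (Y : Matrix (Fin n ⊕ Fin n) (Fin n ⊕ Fin n) ℂ) :
    Jmat n * Y * (Complex.I • Jmat n * (Jmat n * X + (Jmat n * X)ᵀ))
        + (Complex.I • Jmat n * (Jmat n * X + (Jmat n * X)ᵀ))ᵀ * (Jmat n * Y)
      = (2 * Complex.I) • (Jmat n * (X * Y - Y * X)) := by
  have hJJX : Jmat n * (Jmat n * X) = -X := by
    rw [← Matrix.mul_assoc, Jmat_mul_Jmat, neg_one_mul]
  rw [transpose_Jmat_mul_eq_self hX, ← two_smul ℂ (Jmat n * X)]
  simp only [Matrix.mul_smul, Matrix.smul_mul, Matrix.transpose_smul, hJJX, Matrix.transpose_neg,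
    Matrix.mul_neg, Matrix.neg_mul]
  rw [← Matrix.mul_assoc Xᵀ, eq_neg_of_add_eq_zero_left hX]
  simp only [Matrix.mul_sub, Matrix.neg_mul, Matrix.mul_assoc]
  module

end Symplectic

theorem qop_satisfiesCCR (n k : ℕ) : SatisfiesCCR (qop n k) (Complex.I • Jmat n) := by
  intro a b c d
  refine LinearMap.ext fun f => ?_
  rcases a with a | a <;> rcases b with b | b
  · simp [qop, Ring.lie_def, Jmat, mul_left_comm]
  · by_cases hab : a = b <;> by_cases hcd : c = d <;>
      simp [qop, Ring.lie_def, Jmat, pderiv_X, hab, hcd]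
  · by_cases hab : a = b <;> by_cases hcd : c = d <;>
      simp [qop, Ring.lie_def, Jmat, pderiv_X, eq_comm (a := b), eq_comm (a := d), hab, hcd]
  · simp [qop, Ring.lie_def, Jmat, pderiv_pderiv_comm]

section OrthogonalInvariance

variable {n k : ℕ} {g : Matrix (Fin k) (Fin k) ℂ}

theorem rho_X (j : Fin n) (c : Fin k) :
    rho n k g (X (j, c)) = ∑ b, X (j, b) * C (g b c) :=
  aeval_X _ _

theorem pderiv_rho (j : Fin n) (c : Fin k) (f : MvPolynomial (Fin n × Fin k) ℂ) :
    pderiv (j, c) (rho n k g f) = ∑ d, g c d • rho n k g (pderiv (j, d) f) := by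
  rw [rho, pderiv_aeval, Fintype.sum_prod_type]
  simp only [map_sum, pderiv_mul, pderiv_C, mul_zero, add_zero, pderiv_X, Pi.single_apply,
    Prod.mk.injEq, ite_and, ite_mul, one_mul, zero_mul, Finset.sum_ite_eq', Finset.sum_ite_irrel,
    Finset.sum_const_zero, Finset.mem_univ, if_true, mul_ite, mul_zero]
  simp only [smul_eq_C_mul, mul_comm]

theorem rho_mul_qop (hg : gᵀ * g = 1) (a : Fin n ⊕ Fin n) (d : Fin k) :
    (rho n k g).toLinearMap * qop n k a d
      = ∑ c, g c d • (qop n k a c * (rho n k g).toLinearMap) := by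
  refine LinearMap.ext fun f => ?_
  rcases a with a | a
  · simp only [qop, Module.End.mul_apply, LinearMap.mulLeft_apply, AlgHom.toLinearMap_apply,
      map_mul, rho_X, Finset.sum_mul, LinearMap.sum_apply, LinearMap.smul_apply, smul_eq_C_mul]
    exact Finset.sum_congr rfl fun c _ => by ring
  · have hgg : ∀ e, ∑ c, g c d * g c e = if d = e then 1 else 0 := fun e => by
      rw [← Matrix.one_apply, ← hg, Matrix.mul_apply]
      simp only [Matrix.transpose_apply]
    simp only [qop, Module.End.mul_apply, LinearMap.smul_apply, AlgHom.toLinearMap_apply,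
      LinearMap.sum_apply, Derivation.coeFn_coe, map_smul, pderiv_rho, Finset.smul_sum, smul_smul]
    rw [Finset.sum_comm]
    simp only [mul_left_comm (g _ d), ← smul_smul (-Complex.I), ← Finset.smul_sum,
      ← Finset.sum_smul, hgg, ite_smul, one_smul, zero_smul, Finset.sum_ite_eq, Finset.mem_univ,
      if_true]

end OrthogonalInvariance

theorem oscRep_eq_smul_quadOp (n k : ℕ) (X : Matrix (Fin n ⊕ Fin n) (Fin n ⊕ Fin n) ℂ) :
    oscRep n k X = (Complex.I / 2) • quadOp (qop n k) (Jmat n * X) := rfl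

theorem oscRep_k_lie_hom_and_Ok_invariant_general (n k : ℕ) :
    -- (a) `π` is a Lie algebra homomorphism on `sp_n(ℂ)`
    (∀ X Y : Matrix (Fin n ⊕ Fin n) (Fin n ⊕ Fin n) ℂ,
      Xᵀ * Jmat n + Jmat n * X = 0 → Yᵀ * Jmat n + Jmat n * Y = 0 →
      oscRep n k X * oscRep n k Y - oscRep n k Y * oscRep n k X
        = oscRep n k (X * Y - Y * X)) ∧
    -- (b) `π(X)` commutes with the action of the complex orthogonal group `O_k(ℂ)`
    (∀ g : Matrix (Fin k) (Fin k) ℂ, gᵀ * g = 1 →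
      ∀ X : Matrix (Fin n ⊕ Fin n) (Fin n ⊕ Fin n) ℂ,
        Xᵀ * Jmat n + Jmat n * X = 0 →
        (rho n k g).toLinearMap ∘ₗ oscRep n k X
          = oscRep n k X ∘ₗ (rho n k g).toLinearMap) := by
  refine ⟨fun X Y hX _ => ?_, fun g hg X _ => ?_⟩
  · calc oscRep n k X * oscRep n k Y - oscRep n k Y * oscRep n k X
        = (Complex.I / 2 * (Complex.I / 2)) •
            ⁅quadOp (qop n k) (Jmat n * X), quadOp (qop n k) (Jmat n * Y)⁆ := by
          simp only [oscRep_eq_smul_quadOp, Ring.lie_def, smul_mul_smul_comm, smul_sub]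
      _ = (Complex.I / 2 * (Complex.I / 2)) •
            -quadOp (qop n k) ((2 * Complex.I) • (Jmat n * (X * Y - Y * X))) := by
          rw [quadOp_lie_quadOp (qop_satisfiesCCR n k), Jmat_mul_commutator_eq hX]
      _ = oscRep n k (X * Y - Y * X) := by
          rw [oscRep_eq_smul_quadOp, map_smul, smul_neg, smul_smul, ← neg_smul]
          congr 1
          linear_combination (-Complex.I / 2) * Complex.I_sq
  · rw [← Module.End.mul_eq_comp, ← Module.End.mul_eq_comp]
    exact ((commute_quadOp_of_mul_eq (mul_eq_one_comm.mp hg) (rho_mul_qop hg) _).smul_right _).eq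

theorem oscRep_k_lie_hom_and_Ok_invariant (n k : ℕ) (hn : 1 ≤ n) (hk : 1 ≤ k) :
    -- (a) `π` is a Lie algebra homomorphism on `sp_n(ℂ)`
    (∀ X Y : Matrix (Fin n ⊕ Fin n) (Fin n ⊕ Fin n) ℂ,
      Xᵀ * Jmat n + Jmat n * X = 0 → Yᵀ * Jmat n + Jmat n * Y = 0 →
      oscRep n k X * oscRep n k Y - oscRep n k Y * oscRep n k X
        = oscRep n k (X * Y - Y * X)) ∧
    -- (b) `π(X)` commutes with the action of the complex orthogonal group `O_k(ℂ)`
    (∀ g : Matrix (Fin k) (Fin k) ℂ, gᵀ * g = 1 →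
      ∀ X : Matrix (Fin n ⊕ Fin n) (Fin n ⊕ Fin n) ℂ,
        Xᵀ * Jmat n + Jmat n * X = 0 →
        (rho n k g).toLinearMap ∘ₗ oscRep n k X
          = oscRep n k X ∘ₗ (rho n k g).toLinearMap) :=
  oscRep_k_lie_hom_and_Ok_invariant_general n k
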